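/- arXiv:1004.3833 — 3 statements merged into one kernel-verified Lean document; each statement's English description precedes it below -/
import Mathlib

section
/- Vertex Grouping preserves the exterior function: Let G be an NFG, let u and v be two distinct vertices of G, and let S denote the set of internal edges joining u and v. Form the NFG G' by merging u and v into a single new vertex w whose incident edges are the edges incident to u or v other than those in S, and whose local function is the sum-of-products ⟨f_u, f_v⟩, i.e., f_w(x_{E(u)∪E(v)∖S}) := ∑_{x_S ∈ ∏_{e∈S} X_e} f_u(x_{E(u)}) · f_v(x_{E(v)}). Then G' is an NFG and Z_{G'} = Z_G. -/
open scoped BigOperators Classical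

/-! # Normal factor graphs -/

/-- `Inc ends extEnd v e` means edge `e` is incident to vertex `v`. -/
def Inc {V Ei Ee : Type} (ends : Ei → V × V) (extEnd : Ee → V) (v : V) :
    Ei ⊕ Ee → Prop
  | .inl i => (ends i).1 = v ∨ (ends i).2 = v
  | .inr j => extEnd j = v

/-- Combine an internal and an external configuration into a configuration on all edges. -/
def combine {Ei Ee : Type} {X : Ei ⊕ Ee → Type}
    (xi : ∀ i : Ei, X (.inl i)) (xe : ∀ j : Ee, X (.inr j)) : ∀ e, X e
  | .inl i => xi i
  | .inr j => xe j

/-- The exterior function realized by a normal factor graph. -/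
noncomputable def Zfun {V Ei Ee : Type} [Fintype V] [Fintype Ei]
    (X : Ei ⊕ Ee → Type) [∀ e, Fintype (X e)]
    (ends : Ei → V × V) (extEnd : Ee → V)
    (f : ∀ v : V, ((e : {e : Ei ⊕ Ee // Inc ends extEnd v e}) → X e.1) → ℂ)
    (xe : ∀ j : Ee, X (.inr j)) : ℂ :=
  ∑ xi : ∀ i : Ei, X (.inl i), ∏ v : V, f v fun e => combine xi xe e.1

/-! ## Grouping two vertices `u` and `v`

The set `S` of internal edges joining `u` and `v` (predicate `Joins`) is deleted; the two
vertices are merged into a single vertex `w` (represented by `⟨v, _⟩` in the vertex type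
`{a : V // a ≠ u}`), whose local function is the sum-of-products `⟨f u, f v⟩`. -/

section Grouping

variable {V Ei Ee : Type} (X : Ei ⊕ Ee → Type)
  (ends : Ei → V × V) (extEnd : Ee → V) (u v : V)

/-- `Joins ends u v i` : the internal edge `i` joins `u` and `v`. -/
def Joins (i : Ei) : Prop := ends i = (u, v) ∨ ends i = (v, u)

/-- The vertex map realizing the merge: `u` is sent to the merged vertex `⟨v, _⟩`,
all other vertices to themselves. -/
noncomputable def mergeV (huv : u ≠ v) (a : V) : {a : V // a ≠ u} :=
  if h : a = u then ⟨v, Ne.symm huv⟩ else ⟨a, h⟩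

lemma mergeV_fst (huv : u ≠ v) {b : V} (hb : b = u ∨ b = v) :
    (mergeV u v huv b).1 = v := by
  rcases hb with hb | hb <;> subst hb
  · rw [mergeV, dif_pos rfl]
  · rw [mergeV, dif_neg (Ne.symm huv)]

lemma mergeV_of_ne (huv : u ≠ v) {a : V} (ha : a ≠ u) :
    mergeV u v huv a = ⟨a, ha⟩ := dif_neg ha

/-- Vertex type of the merged graph. -/
@[reducible] def Vgrp : Type := {a : V // a ≠ u}

/-- Internal edge type of the merged graph: the edges joining `u` and `v` are deleted. -/
@[reducible] def EiGrp : Type := {i : Ei // ¬ Joins ends u v i}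

/-- Edge alphabets of the merged graph. -/
def Xgrp : EiGrp ends u v ⊕ Ee → Type
  | .inl i => X (.inl i.1)
  | .inr j => X (.inr j)

instance XgrpFintype [∀ e, Fintype (X e)] : ∀ e, Fintype (Xgrp X ends u v e)
  | .inl i => inferInstanceAs (Fintype (X (.inl i.1)))
  | .inr j => inferInstanceAs (Fintype (X (.inr j)))

/-- Endpoints of the internal edges of the merged graph. -/
noncomputable def endsGrp (huv : u ≠ v) (i : EiGrp ends u v) : Vgrp u × Vgrp u :=
  (mergeV u v huv (ends i.1).1, mergeV u v huv (ends i.1).2)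

/-- Attachment of the external edges of the merged graph. -/
noncomputable def extEndGrp (huv : u ≠ v) (j : Ee) : Vgrp u :=
  mergeV u v huv (extEnd j)

/-- Assemble, from a configuration `xs` on the deleted edges `S` and a configuration `x`
on the new edges incident to the merged vertex, a configuration on the original edges
incident to `b` (where `b` is `u` or `v`). -/
noncomputable def assembleGrp (huv : u ≠ v) (a : Vgrp u) (ha : a.1 = v)
    (b : V) (hb : b = u ∨ b = v)
    (xs : ∀ s : {i : Ei // Joins ends u v i}, X (.inl s.1))
    (x : (e' : {e' : EiGrp ends u v ⊕ Ee //
        Inc (endsGrp ends u v huv) (extEndGrp extEnd u v huv) a e'}) → Xgrp X ends u v e'.1) :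
    (e : {e : Ei ⊕ Ee // Inc ends extEnd b e}) → X e.1 :=
  fun e =>
    match e with
    | ⟨.inl i, h⟩ =>
        if hJ : Joins ends u v i then xs ⟨i, hJ⟩
        else
          x ⟨.inl ⟨i, hJ⟩, by
            rcases h with h | h
            · exact Or.inl (Subtype.ext (by
                rw [ha]; exact (by rw [h] : (mergeV u v huv (ends i).1).1
                  = (mergeV u v huv b).1).trans (mergeV_fst u v huv hb)))
            · exact Or.inr (Subtype.ext (by
                rw [ha]; exact (by rw [h] : (mergeV u v huv (ends i).2).1
                  = (mergeV u v huv b).1).trans (mergeV_fst u v huv hb)))⟩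
    | ⟨.inr j, h⟩ =>
        x ⟨.inr j, Subtype.ext (by
          show (mergeV u v huv (extEnd j)).1 = a.1
          rw [ha]
          exact (by rw [h] : (mergeV u v huv (extEnd j)).1
            = (mergeV u v huv b).1).trans (mergeV_fst u v huv hb))⟩

/-- Restriction of a configuration on the new edges incident to a vertex `a ∉ {u, v}`
to a configuration on the original edges incident to `a`. -/
noncomputable def restrictGrp (huv : u ≠ v) (a : Vgrp u) (ha : a.1 ≠ v)
    (x : (e' : {e' : EiGrp ends u v ⊕ Ee //
        Inc (endsGrp ends u v huv) (extEndGrp extEnd u v huv) a e'}) → Xgrp X ends u v e'.1) :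
    (e : {e : Ei ⊕ Ee // Inc ends extEnd a.1 e}) → X e.1 :=
  fun e =>
    match e with
    | ⟨.inl i, h⟩ =>
        have hJ : ¬ Joins ends u v i := by
          have h' : (ends i).1 = a.1 ∨ (ends i).2 = a.1 := h
          rintro (hJ | hJ) <;> rw [hJ] at h' <;> rcases h' with h' | h'
          · exact a.2 h'.symm
          · exact ha h'.symm
          · exact ha h'.symm
          · exact a.2 h'.symm
        x ⟨.inl ⟨i, hJ⟩, by
          rcases h with h | h
          · exact Or.inl (by rw [endsGrp]; dsimp only; rw [h, mergeV_of_ne u v huv a.2])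
          · exact Or.inr (by rw [endsGrp]; dsimp only; rw [h, mergeV_of_ne u v huv a.2])⟩
    | ⟨.inr j, h⟩ =>
        x ⟨.inr j, by
          show mergeV u v huv (extEnd j) = a
          rw [h, mergeV_of_ne u v huv a.2]⟩

/-- Local functions of the merged graph: the merged vertex `⟨v, _⟩` carries the
sum-of-products `⟨f u, f v⟩` (summing over the configurations of the deleted edges `S`),
and all other vertices keep their local functions. -/
noncomputable def fGrp (huv : u ≠ v)
    [Fintype Ei] [∀ e, Fintype (X e)]
    (f : ∀ w : V, ((e : {e : Ei ⊕ Ee // Inc ends extEnd w e}) → X e.1) → ℂ)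
    (a : Vgrp u)
    (x : (e' : {e' : EiGrp ends u v ⊕ Ee //
        Inc (endsGrp ends u v huv) (extEndGrp extEnd u v huv) a e'}) → Xgrp X ends u v e'.1) :
    ℂ :=
  if ha : a.1 = v then
    ∑ xs : ∀ s : {i : Ei // Joins ends u v i}, X (.inl s.1),
      f u (assembleGrp X ends extEnd u v huv a ha u (Or.inl rfl) xs x)
        * f v (assembleGrp X ends extEnd u v huv a ha v (Or.inr rfl) xs x)
  else
    f a.1 (restrictGrp X ends extEnd u v huv a ha x)

end Grouping

/-! Split a configuration of the internal edges of `G` into its values `x_S` on the deleted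
edges and its values on the internal edges of `G'`. With the latter fixed, every factor of `G'`
other than the merged one is the corresponding factor of `G`, and the merged factor is
`∑ x_S, f_u f_v`; distributing this sum over the product gives the sum over `x_S` of the
product of all factors of `G`. The edges of `G'` keep distinct endpoints because merging
identifies only `u` with `v`, and the edges joining them are deleted. -/

section GroupingCorrect

variable {V Ei Ee : Type} (X : Ei ⊕ Ee → Type)
  (ends : Ei → V × V) (extEnd : Ee → V) {u v : V} (huv : u ≠ v)

lemma eq_or_eq_pair_of_mergeV_eq {a b : V} (h : mergeV u v huv a = mergeV u v huv b) :
    a = b ∨ (a, b) = (u, v) ∨ (a, b) = (v, u) := by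
  unfold mergeV at h
  split_ifs at h <;> simp_all

lemma endsGrp_fst_ne_snd (hne : ∀ i : Ei, (ends i).1 ≠ (ends i).2) (i : EiGrp ends u v) :
    (endsGrp ends u v huv i).1 ≠ (endsGrp ends u v huv i).2 := fun h =>
  match eq_or_eq_pair_of_mergeV_eq huv h with
  | .inl h => hne i.1 h
  | .inr h => i.2 h

lemma not_joins_of_inc {a : V} {i : Ei} (h : Inc ends extEnd a (.inl i)) (hau : a ≠ u)
    (hav : a ≠ v) : ¬ Joins ends u v i := by
  rintro (hJ | hJ) <;> simp only [Inc, hJ] at h <;> grind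

noncomputable def splitAtJoins (u v : V) :
    (∀ i : Ei, X (.inl i)) ≃
      (∀ s : {i : Ei // Joins ends u v i}, X (.inl s.1))
        × ∀ i : EiGrp ends u v, Xgrp X ends u v (.inl i) :=
  Equiv.piEquivPiSubtypeProd (Joins ends u v) fun i => X (.inl i)

variable {X ends}

lemma splitAtJoins_symm_apply_of_not_joins {i : Ei} (hJ : ¬ Joins ends u v i)
    (xs : ∀ s : {i : Ei // Joins ends u v i}, X (.inl s.1))
    (xi : ∀ i : EiGrp ends u v, Xgrp X ends u v (.inl i)) :
    (splitAtJoins X ends u v).symm (xs, xi) i = xi ⟨i, hJ⟩ :=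
  dif_neg hJ

variable (xs : ∀ s : {i : Ei // Joins ends u v i}, X (.inl s.1))
  (xi : ∀ i : EiGrp ends u v, Xgrp X ends u v (.inl i)) (xe : ∀ j : Ee, X (.inr j))

lemma assembleGrp_combine (a : Vgrp u) (ha : a.1 = v) (b : V) (hb : b = u ∨ b = v) :
    assembleGrp X ends extEnd u v huv a ha b hb xs (fun e => combine xi xe e.1)
      = fun e : {e // Inc ends extEnd b e} =>
          combine ((splitAtJoins X ends u v).symm (xs, xi)) xe e.1 := by
  funext ⟨e, _⟩
  cases e <;> rfl

lemma restrictGrp_combine (a : Vgrp u) (ha : a.1 ≠ v) :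
    restrictGrp X ends extEnd u v huv a ha (fun e => combine xi xe e.1)
      = fun e : {e // Inc ends extEnd a.1 e} =>
          combine ((splitAtJoins X ends u v).symm (xs, xi)) xe e.1 := by
  funext ⟨e, h⟩
  cases e
  · exact (splitAtJoins_symm_apply_of_not_joins (not_joins_of_inc ends extEnd h a.2 ha) xs xi).symm
  · rfl

variable [Fintype Ei] [∀ e, Fintype (X e)]
  (f : ∀ w : V, ((e : {e : Ei ⊕ Ee // Inc ends extEnd w e}) → X e.1) → ℂ)

lemma fGrp_merged_combine :
    fGrp X ends extEnd u v huv f ⟨v, huv.symm⟩ (fun e => combine xi xe e.1)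
      = ∑ xs, f u (fun e => combine ((splitAtJoins X ends u v).symm (xs, xi)) xe e.1)
          * f v (fun e => combine ((splitAtJoins X ends u v).symm (xs, xi)) xe e.1) := by
  simp only [fGrp, dif_pos, assembleGrp_combine]

lemma fGrp_combine_of_ne (a : Vgrp u) (ha : a.1 ≠ v) :
    fGrp X ends extEnd u v huv f a (fun e => combine xi xe e.1)
      = f a.1 (fun e => combine ((splitAtJoins X ends u v).symm (xs, xi)) xe e.1) := by
  rw [fGrp, dif_neg ha, restrictGrp_combine extEnd huv xs]

variable [Fintype V]

lemma prod_eq_mul_mul_prod_fGrp :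
    ∏ a, f a (fun e => combine ((splitAtJoins X ends u v).symm (xs, xi)) xe e.1)
      = f u (fun e => combine ((splitAtJoins X ends u v).symm (xs, xi)) xe e.1)
        * f v (fun e => combine ((splitAtJoins X ends u v).symm (xs, xi)) xe e.1)
        * ∏ a : {a : Vgrp u // a ≠ ⟨v, huv.symm⟩},
            fGrp X ends extEnd u v huv f a (fun e => combine xi xe e.1) := by
  rw [Fintype.prod_eq_mul_prod_subtype_ne _ u,
    Fintype.prod_eq_mul_prod_subtype_ne _ ⟨v, huv.symm⟩, ← mul_assoc]
  refine congrArg _ (Fintype.prod_congr _ _ fun a => ?_)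
  exact (fGrp_combine_of_ne extEnd huv xs xi xe f _ fun h => a.2 (Subtype.ext h)).symm

lemma Zfun_grouping :
    Zfun (Xgrp X ends u v) (endsGrp ends u v huv) (extEndGrp extEnd u v huv)
        (fGrp X ends extEnd u v huv f) xe
      = Zfun X ends extEnd f xe := by
  unfold Zfun
  rw [← Equiv.sum_comp (splitAtJoins X ends u v).symm, Fintype.sum_prod_type, Finset.sum_comm]
  -- the two `univ`s carry different (hence only propositionally equal) `Fintype` instances
  refine Finset.sum_congr (by congr!) fun xi _ => ?_
  rw [Fintype.prod_eq_mul_prod_subtype_ne _ ⟨v, huv.symm⟩, fGrp_merged_combine, Finset.sum_mul]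
  exact Finset.sum_congr rfl fun xs _ => (prod_eq_mul_mul_prod_fGrp extEnd huv xs xi xe f).symm

end GroupingCorrect

theorem vertex_grouping_preserves_exterior_function_general {V Ei Ee : Type}
    [Fintype V] [Fintype Ei]
    (X : Ei ⊕ Ee → Type) [∀ e, Fintype (X e)]
    (ends : Ei → V × V) (hne : ∀ i : Ei, (ends i).1 ≠ (ends i).2)
    (extEnd : Ee → V)
    (f : ∀ w : V, ((e : {e : Ei ⊕ Ee // Inc ends extEnd w e}) → X e.1) → ℂ)
    (u v : V) (huv : u ≠ v) :
    (∀ i : EiGrp ends u v,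
        (endsGrp ends u v huv i).1 ≠ (endsGrp ends u v huv i).2)
      ∧ ∀ xe : ∀ j : Ee, X (.inr j),
          Zfun (Xgrp X ends u v) (endsGrp ends u v huv) (extEndGrp extEnd u v huv)
              (fGrp X ends extEnd u v huv f) xe
            = Zfun X ends extEnd f xe :=
  ⟨endsGrp_fst_ne_snd ends huv hne, fun xe => Zfun_grouping extEnd huv xe f⟩

/-- **Vertex Grouping preserves the exterior function.**
Let `G` be an NFG, `u ≠ v` two vertices, and `S` the set of internal edges joining `u` and
`v`.  Merging `u` and `v` into a single vertex whose incident edges are those incident to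
`u` or `v` other than `S` and whose local function is the sum-of-products `⟨f u, f v⟩`
yields an NFG `G'` (in particular, every internal edge of `G'` again has two distinct
endpoints), and `Z_{G'} = Z_G`. -/
theorem vertex_grouping_preserves_exterior_function {V Ei Ee : Type}
    [Fintype V] [Fintype Ei] [Fintype Ee]
    (X : Ei ⊕ Ee → Type) [∀ e, Fintype (X e)]
    (ends : Ei → V × V) (hne : ∀ i : Ei, (ends i).1 ≠ (ends i).2)
    (extEnd : Ee → V)
    (f : ∀ w : V, ((e : {e : Ei ⊕ Ee // Inc ends extEnd w e}) → X e.1) → ℂ)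
    (u v : V) (huv : u ≠ v) :
    (∀ i : EiGrp ends u v,
        (endsGrp ends u v huv i).1 ≠ (endsGrp ends u v huv i).2)
      ∧ ∀ xe : ∀ j : Ee, X (.inr j),
          Zfun (Xgrp X ends u v) (endsGrp ends u v huv) (extEndGrp extEnd u v huv)
              (fGrp X ends extEnd u v huv f) xe
            = Zfun X ends extEnd f xe :=
  vertex_grouping_preserves_exterior_function_general X ends hne extEnd f u v huv
end

section
/- Generalized Holant Theorem: Let G = (V, E_int, E_ext, f_V) be an NFG with alphabets X_e. For each edge e, let Y_e be a finite alphabet, and for each vertex v and each edge e ∈ E(v), let Φ_{v,e} : X_e × Y_e → ℂ be a function such that for every internal edge e with endpoints u and v, the pair Φ_{u,e}, Φ_{v,e} is dual with respect to the coupling alphabet Y_e. For each vertex v define F_v : ∏_{e∈E(v)} Y_e → ℂ by F_v(y_{E(v)}) := ∑_{x_{E(v)} ∈ ∏_{e∈E(v)} X_e} f_v(x_{E(v)}) · ∏_{e∈E(v)} Φ_{v,e}(x_e, y_e), and let G^H := (V, E_int, E_ext, F_V) be the NFG with the same topology, edge alphabets Y_e, and local functions F_v. Then Z_{G^H}(y_{E_ext})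 = ∑_{x_{E_ext} ∈ ∏_{e∈E_ext} X_e} Z_G(x_{E_ext}) · ∏_{e∈E_ext} Φ_e(x_e, y_e), where for an external edge e, Φ_e denotes Φ_{v,e} for the unique vertex v incident to e. -/
open scoped BigOperators Classical

/-! Expanding every transformed local function `F v` as a sum over local `X`-configurations
turns `Z_{G^H}` into a sum over families assigning an `X`-symbol to every half-edge. For a
fixed family the sum over the internal `Y`-symbols factors over internal edges, and duality
makes each factor the indicator that the two half-edges of that edge carry the same symbol.
The surviving families are exactly the global `X`-configurations, and what remains is `Z_G`
weighted by the transformers on the external edges. -/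

section Duality

variable {R : Type*} [CommSemiring R]

def IsDual {A Y : Type*} [Fintype Y] [DecidableEq A] (φ ψ : A → Y → R) : Prop :=
  ∀ x x', ∑ y, φ x y * ψ x' y = if x = x' then 1 else 0

theorem IsDual.pi {ι : Type*} [Fintype ι] {A Y : ι → Type*} [∀ i, Fintype (Y i)]
    [∀ i, DecidableEq (A i)] {φ ψ : ∀ i, A i → Y i → R} (h : ∀ i, IsDual (φ i) (ψ i)) :
    IsDual (fun (a : ∀ i, A i) (y : ∀ i, Y i) => ∏ i, φ i (a i) (y i))
      (fun b y => ∏ i, ψ i (b i) (y i)) := by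
  intro a b
  simp_rw [← Finset.prod_mul_distrib]
  rw [← Fintype.prod_sum (fun i y => φ i (a i) y * ψ i (b i) y)]
  simp_rw [fun i => h i (a i) (b i), Fintype.prod_boole, funext_iff]

end Duality

section HalfEdges

variable {V Ei Ee : Type} (ends : Ei → V × V) (extEnd : Ee → V)

theorem inc_inl_fst (i : Ei) : Inc ends extEnd (ends i).1 (.inl i) := Or.inl rfl

theorem inc_inl_snd (i : Ei) : Inc ends extEnd (ends i).2 (.inl i) := Or.inr rfl

theorem inc_inr (j : Ee) : Inc ends extEnd (extEnd j) (.inr j) := rfl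

noncomputable def halfEdgeEquiv (hne : ∀ i : Ei, (ends i).1 ≠ (ends i).2) :
    (Ei ⊕ Ei ⊕ Ee) ≃ Σ v : V, {e : Ei ⊕ Ee // Inc ends extEnd v e} where
  toFun
    | .inl i => ⟨(ends i).1, ⟨.inl i, inc_inl_fst ends extEnd i⟩⟩
    | .inr (.inl i) => ⟨(ends i).2, ⟨.inl i, inc_inl_snd ends extEnd i⟩⟩
    | .inr (.inr j) => ⟨extEnd j, ⟨.inr j, inc_inr ends extEnd j⟩⟩
  invFun
    | ⟨v, ⟨.inl i, _⟩⟩ => if (ends i).1 = v then .inl i else .inr (.inl i)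
    | ⟨_, ⟨.inr j, _⟩⟩ => .inr (.inr j)
  left_inv := by
    rintro (i | i | j)
    · simp
    · simp [hne i]
    · rfl
  right_inv := by
    rintro ⟨v, ⟨i | j, h⟩⟩
    · rcases h with rfl | rfl
      · simp
      · simp [hne i]
    · cases h; rfl

theorem prod_halfEdges {M : Type*} [CommMonoid M] [Fintype V] [Fintype Ei] [Fintype Ee]
    (hne : ∀ i : Ei, (ends i).1 ≠ (ends i).2)
    (h : ∀ v, {e : Ei ⊕ Ee // Inc ends extEnd v e} → M) :
    ∏ v, ∏ e, h v e =
      (∏ i, h (ends i).1 ⟨.inl i, inc_inl_fst ends extEnd i⟩ *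
          h (ends i).2 ⟨.inl i, inc_inl_snd ends extEnd i⟩) *
        ∏ j, h (extEnd j) ⟨.inr j, inc_inr ends extEnd j⟩ := by
  rw [← Fintype.prod_sigma', ← (halfEdgeEquiv ends extEnd hne).prod_comp,
    Fintype.prod_sum_type, Fintype.prod_sum_type, ← mul_assoc, ← Finset.prod_mul_distrib]
  rfl

abbrev LocalConfig (X : Ei ⊕ Ee → Type) : Type :=
  ∀ v : V, (e : {e : Ei ⊕ Ee // Inc ends extEnd v e}) → X e.1

def IsConsistent {X : Ei ⊕ Ee → Type} (g : LocalConfig ends extEnd X) : Prop :=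
  ∀ i : Ei, g (ends i).1 ⟨.inl i, inc_inl_fst ends extEnd i⟩ =
    g (ends i).2 ⟨.inl i, inc_inl_snd ends extEnd i⟩

def consistentConfigEquiv (X : Ei ⊕ Ee → Type) :
    ((∀ i : Ei, X (.inl i)) × (∀ j : Ee, X (.inr j))) ≃
      {g : LocalConfig ends extEnd X // IsConsistent ends extEnd g} where
  toFun x := ⟨fun _ e => combine x.1 x.2 e.1, fun _ => rfl⟩
  invFun g := (fun i => g.1 (ends i).1 ⟨.inl i, inc_inl_fst ends extEnd i⟩,
    fun j => g.1 (extEnd j) ⟨.inr j, inc_inr ends extEnd j⟩)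
  left_inv _ := rfl
  right_inv := by
    rintro ⟨g, hg⟩
    ext v ⟨i | j, h⟩
    · rcases h with rfl | rfl
      · rfl
      · exact hg i
    · cases h; rfl

theorem sum_ite_isConsistent {X : Ei ⊕ Ee → Type} [Fintype V] [Fintype Ei] [Fintype Ee]
    [∀ e, Fintype (X e)] {M : Type*} [AddCommMonoid M] (h : LocalConfig ends extEnd X → M) :
    ∑ g, (if IsConsistent ends extEnd g then h g else 0) =
      ∑ xe : ∀ j : Ee, X (.inr j), ∑ xi : ∀ i : Ei, X (.inl i),
        h fun _ e => combine xi xe e.1 := by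
  rw [← Finset.sum_filter, Finset.sum_subtype (p := IsConsistent ends extEnd) _ (by simp),
    ← (consistentConfigEquiv ends extEnd X).sum_comp, Fintype.sum_prod_type_right]
  rfl

end HalfEdges

section Transform

variable {V Ei Ee : Type} [Fintype V] [Fintype Ei] [Fintype Ee]
  {X Y : Ei ⊕ Ee → Type} [∀ e, Fintype (Y e)] {ends : Ei → V × V} {extEnd : Ee → V}

noncomputable def localTransform [∀ e, Fintype (X e)] (ends : Ei → V × V) (extEnd : Ee → V)
    (f : ∀ v : V, ((e : {e : Ei ⊕ Ee // Inc ends extEnd v e}) → X e.1) → ℂ)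
    (Φ : V → ∀ e : Ei ⊕ Ee, X e → Y e → ℂ) (v : V)
    (yv : (e : {e : Ei ⊕ Ee // Inc ends extEnd v e}) → Y e.1) : ℂ :=
  ∑ xv, f v xv * ∏ e, Φ v e.1 (xv e) (yv e)

theorem Zfun_localTransform_eq_sum_localConfig [∀ e, Fintype (X e)]
    (f : ∀ v : V, ((e : {e : Ei ⊕ Ee // Inc ends extEnd v e}) → X e.1) → ℂ)
    (Φ : V → ∀ e : Ei ⊕ Ee, X e → Y e → ℂ) (ye : ∀ j : Ee, Y (.inr j)) :
    Zfun Y ends extEnd (localTransform ends extEnd f Φ) ye =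
      ∑ g : LocalConfig ends extEnd X, (∏ v, f v (g v)) *
        ∑ yi : ∀ i : Ei, Y (.inl i), ∏ v, ∏ e, Φ v e.1 (g v e) (combine yi ye e.1) := by
  simp_rw [Zfun, localTransform, Fintype.prod_sum, Finset.mul_sum, ← Finset.prod_mul_distrib]
  exact Finset.sum_comm

theorem sum_internal_prod_eq_ite_isConsistent (hne : ∀ i : Ei, (ends i).1 ≠ (ends i).2)
    (Φ : V → ∀ e : Ei ⊕ Ee, X e → Y e → ℂ)
    (hdual : ∀ i : Ei, IsDual (Φ (ends i).1 (.inl i)) (Φ (ends i).2 (.inl i)))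
    (g : LocalConfig ends extEnd X) (ye : ∀ j : Ee, Y (.inr j)) :
    ∑ yi : ∀ i : Ei, Y (.inl i), ∏ v, ∏ e, Φ v e.1 (g v e) (combine yi ye e.1) =
      if IsConsistent ends extEnd g then
        ∏ j, Φ (extEnd j) (.inr j) (g (extEnd j) ⟨.inr j, inc_inr ends extEnd j⟩) (ye j)
      else 0 := by
  simp_rw [prod_halfEdges ends extEnd hne, combine, ← Finset.sum_mul, Finset.prod_mul_distrib]
  rw [IsDual.pi hdual (fun i => g (ends i).1 ⟨.inl i, inc_inl_fst ends extEnd i⟩)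
    (fun i => g (ends i).2 ⟨.inl i, inc_inl_snd ends extEnd i⟩), ite_mul, one_mul, zero_mul]
  exact if_congr funext_iff rfl rfl

end Transform

/-- **Generalized Holant Theorem.**
Let `G = (V, Ei, Ee, f)` be an NFG with edge alphabets `X e`.  For each vertex `v` and edge
`e` let `Φ v e : X e × Y e → ℂ` be such that for every internal edge `i` the pair of
transformers at its two endpoints is dual with respect to the coupling alphabet `Y (.inl i)`.
Let `F v` be the local transform of `f v` by its surrounding transformers, and let
`G^H = (V, Ei, Ee, F)` be the holographically transformed NFG (same topology, alphabets
`Y e`).  Then `Z_{G^H}(y) = ∑ x_ext, Z_G(x_ext) * ∏_{e external} Φ_e (x_e, y_e)`. -/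
theorem generalized_holant_theorem {V Ei Ee : Type}
    [Fintype V] [Fintype Ei] [Fintype Ee]
    (X Y : Ei ⊕ Ee → Type) [∀ e, Fintype (X e)] [∀ e, Fintype (Y e)]
    (ends : Ei → V × V) (hne : ∀ i : Ei, (ends i).1 ≠ (ends i).2)
    (extEnd : Ee → V)
    (f : ∀ v : V, ((e : {e : Ei ⊕ Ee // Inc ends extEnd v e}) → X e.1) → ℂ)
    (Φ : ∀ v : V, ∀ e : Ei ⊕ Ee, X e → Y e → ℂ)
    (hdual : ∀ i : Ei, ∀ x x' : X (.inl i),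
      ∑ y : Y (.inl i), Φ (ends i).1 (.inl i) x y * Φ (ends i).2 (.inl i) x' y
        = if x = x' then 1 else 0)
    (F : ∀ v : V, ((e : {e : Ei ⊕ Ee // Inc ends extEnd v e}) → Y e.1) → ℂ)
    (hF : ∀ v yv, F v yv =
      ∑ xv : (e : {e : Ei ⊕ Ee // Inc ends extEnd v e}) → X e.1,
        f v xv * ∏ e : {e : Ei ⊕ Ee // Inc ends extEnd v e}, Φ v e.1 (xv e) (yv e))
    (ye : ∀ j : Ee, Y (.inr j)) :
    Zfun Y ends extEnd F ye
      = ∑ xe : ∀ j : Ee, X (.inr j),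
          Zfun X ends extEnd f xe * ∏ j : Ee, Φ (extEnd j) (.inr j) (xe j) (ye j) := by
  obtain rfl : F = localTransform ends extEnd f Φ := funext fun v => funext (hF v)
  simp_rw [Zfun_localTransform_eq_sum_localConfig,
    sum_internal_prod_eq_ite_isConsistent hne Φ hdual, mul_ite, mul_zero, sum_ite_isConsistent,
    Zfun, Finset.sum_mul]
  rfl
end

section
/- PerfMatch decomposes over matchgates: Let (H_1, W_1), …, (H_m, W_m) be matchgates with pairwise disjoint vertex sets, and let H be the weighted graph whose vertex set is the union of the vertex sets of the H_i and whose edge set is the union of the edge sets of the H_i (with their weights) together with a set ℰ of connecting edges, each of weight 1, where each edge in ℰ joins an external vertex of one matchgate to an external vertex of a different matchgate and every external vertex of every matchgate is the endpoint of exactly one edge of ℰ. For each i, let ℰ(i) ⊆ ℰ be the connecting edges with an endpoint in H_i, and for a configuration x ∈ {0,1}^ℰ define the signature value μ_i(x_{ℰ(i)}) := π(H_i'), where H_i' is the weighted subgraph of H_i induced by deleting exactly those external vertices of H_i that are endpoints of some e ∈ ℰ(i) with x_e = 1. Then π(H) = ∑_{x ∈ {0,1}^ℰ} ∏_{i=1}^m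 μ_i(x_{ℰ(i)}). -/
open scoped BigOperators Classical

/-! # PerfMatch and matchgates

We work with a finite vertex type `Ω`, partitioned into `m` matchgates by `part : Ω → Fin m`.
Matchgate `i` is a weighted graph `G i` (all of whose edges join vertices of class `i`),
with weight function `w`, and with external vertices `W ∩ part⁻¹ i` (where `W : Finset Ω`).
The connecting edges are indexed by a finite type `Conn` with endpoint map `epts`; each
connecting edge joins external vertices of two different matchgates and every external
vertex lies on exactly one connecting edge.  Connecting edges get weight `1`. -/

/-- `M` is a perfect matching of the subgraph of `G` induced on the vertex set `A`:
its edges are edges of `G` lying inside `A`, and every vertex of `A` lies on exactly one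
edge of `M`. -/
def IsPerfectMatchingOn {Ω : Type} (G : SimpleGraph Ω) (A : Finset Ω)
    (M : Finset (Sym2 Ω)) : Prop :=
  (∀ e ∈ M, e ∈ G.edgeSet ∧ ∀ ω ∈ e, ω ∈ A) ∧ ∀ ω ∈ A, ∃! e : Sym2 Ω, e ∈ M ∧ ω ∈ e

/-- The PerfMatch of the weighted subgraph of `(G, w)` induced on the vertex set `A`:
the sum, over all perfect matchings `M` of that subgraph, of `∏ e ∈ M, w e`. -/
noncomputable def perfMatchOn {Ω : Type} [Fintype Ω] [DecidableEq Ω]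
    (G : SimpleGraph Ω) (w : Sym2 Ω → ℂ) (A : Finset Ω) : ℂ :=
  ∑ M ∈ Finset.univ.filter (IsPerfectMatchingOn G A), ∏ e ∈ M, w e

/-! A perfect matching of the glued graph is the same thing as a set `x` of connecting edges
(each of weight `1`) together with a perfect matching of the matchgates with the endpoints of
those edges deleted, so PerfMatch becomes a sum over `x`.  The matchgates are vertex-disjoint,
so a perfect matching of their union is a family of perfect matchings of the individual
matchgates, and each summand factors into the product of the signature values. -/

open Finset

section Components

variable {Ω : Type} {ι : Type*} {part : Ω → ι} {G : ι → SimpleGraph Ω}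

lemma part_eq_of_mem_edgeSet
    (hG : ∀ (i : ι) (a b : Ω), (G i).Adj a b → part a = i ∧ part b = i)
    {i : ι} {e : Sym2 Ω} (he : e ∈ (G i).edgeSet) {v : Ω} (hv : v ∈ e) : part v = i := by
  induction e using Sym2.ind with
  | _ a b =>
    rcases Sym2.mem_iff.1 hv with rfl | rfl
    exacts [(hG i _ _ he).1, (hG i _ _ he).2]

lemma eq_of_mem_edgeSet_of_mem_edgeSet
    (hG : ∀ (i : ι) (a b : Ω), (G i).Adj a b → part a = i ∧ part b = i)
    {i j : ι} {e : Sym2 Ω} (hi : e ∈ (G i).edgeSet) (hj : e ∈ (G j).edgeSet) : i = j :=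
  (part_eq_of_mem_edgeSet hG hi e.out_fst_mem).symm.trans
    (part_eq_of_mem_edgeSet hG hj e.out_fst_mem)

lemma IsPerfectMatchingOn.filter_edgeSet [DecidableEq ι]
    (hG : ∀ (i : ι) (a b : Ω), (G i).Adj a b → part a = i ∧ part b = i)
    {A : Finset Ω} {M : Finset (Sym2 Ω)} (hM : IsPerfectMatchingOn (⨆ i, G i) A M) (i : ι) :
    IsPerfectMatchingOn (G i) (A.filter (part · = i)) (M.filter (· ∈ (G i).edgeSet)) := by
  constructor
  · intro e he
    rw [mem_filter] at he
    exact ⟨he.2, fun v hv =>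
      mem_filter.2 ⟨(hM.1 e he.1).2 v hv, part_eq_of_mem_edgeSet hG he.2 hv⟩⟩
  · intro v hv
    rw [mem_filter] at hv
    obtain ⟨e, ⟨heM, hve⟩, huniq⟩ := hM.2 v hv.1
    obtain ⟨j, hj⟩ : ∃ j, e ∈ (G j).edgeSet := by
      simpa [SimpleGraph.edgeSet_iSup] using (hM.1 e heM).1
    obtain rfl : j = i := (part_eq_of_mem_edgeSet hG hj hve).symm.trans hv.2
    exact ⟨e, ⟨mem_filter.2 ⟨heM, hj⟩, hve⟩,
      fun e' he' => huniq e' ⟨(mem_filter.1 he'.1).1, he'.2⟩⟩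

lemma isPerfectMatchingOn_biUnion [Fintype ι] [DecidableEq ι] [DecidableEq Ω]
    (hG : ∀ (i : ι) (a b : Ω), (G i).Adj a b → part a = i ∧ part b = i)
    {A : Finset Ω} {F : ι → Finset (Sym2 Ω)}
    (hF : ∀ i, IsPerfectMatchingOn (G i) (A.filter (part · = i)) (F i)) :
    IsPerfectMatchingOn (⨆ i, G i) A (univ.biUnion F) := by
  constructor
  · intro e he
    obtain ⟨i, -, hi⟩ := mem_biUnion.1 he
    exact ⟨SimpleGraph.edgeSet_subset_edgeSet.2 (le_iSup G i) ((hF i).1 e hi).1,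
      fun v hv => (mem_filter.1 (((hF i).1 e hi).2 v hv)).1⟩
  · intro v hv
    obtain ⟨e, ⟨he, hve⟩, huniq⟩ := (hF (part v)).2 v (mem_filter.2 ⟨hv, rfl⟩)
    refine ⟨e, ⟨mem_biUnion.2 ⟨_, mem_univ _, he⟩, hve⟩, ?_⟩
    rintro e' ⟨he', hve'⟩
    obtain ⟨j, -, hj⟩ := mem_biUnion.1 he'
    obtain rfl : part v = j := part_eq_of_mem_edgeSet hG ((hF j).1 e' hj).1 hve'
    exact huniq e' ⟨hj, hve'⟩

theorem perfMatchOn_iSup_eq_prod [Fintype Ω] [DecidableEq Ω] [Fintype ι] [DecidableEq ι]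
    (hG : ∀ (i : ι) (a b : Ω), (G i).Adj a b → part a = i ∧ part b = i)
    (w : Sym2 Ω → ℂ) (A : Finset Ω) :
    perfMatchOn (⨆ i, G i) w A = ∏ i, perfMatchOn (G i) w (A.filter (part · = i)) := by
  simp only [perfMatchOn, prod_univ_sum]
  symm
  refine sum_nbij' (fun F => univ.biUnion F) (fun M i => M.filter (· ∈ (G i).edgeSet))
    ?_ ?_ ?_ ?_ ?_
  · intro F hF
    simp only [Fintype.mem_piFinset, mem_filter, mem_univ, true_and] at hF
    simpa using isPerfectMatchingOn_biUnion hG hF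
  · intro M hM
    simpa [Fintype.mem_piFinset] using (mem_filter.1 hM).2.filter_edgeSet hG
  · intro F hF
    simp only [Fintype.mem_piFinset, mem_filter, mem_univ, true_and] at hF
    funext i
    ext e
    simp only [mem_filter, mem_biUnion, mem_univ, true_and]
    refine ⟨fun ⟨⟨j, hj⟩, hi⟩ => ?_, fun he => ⟨⟨i, he⟩, ((hF i).1 e he).1⟩⟩
    rwa [eq_of_mem_edgeSet_of_mem_edgeSet hG hi ((hF j).1 e hj).1]
  · intro M hM
    ext e
    simp only [mem_biUnion, mem_univ, mem_filter, true_and]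
    refine ⟨fun ⟨_, he, _⟩ => he, fun he => ?_⟩
    simpa [SimpleGraph.edgeSet_iSup, he] using ((mem_filter.1 hM).2.1 e he).1
  · intro F hF
    simp only [Fintype.mem_piFinset, mem_filter, mem_univ, true_and] at hF
    refine (prod_biUnion fun i _ j _ hij => disjoint_left.2 fun e hi hj => hij ?_).symm
    exact eq_of_mem_edgeSet_of_mem_edgeSet hG ((hF i).1 e hi).1 ((hF j).1 e hj).1

end Components

section ConnectingEdges

variable {Ω : Type} {Conn : Type*} {H G : SimpleGraph Ω} {conn : Conn → Sym2 Ω}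

noncomputable def uncoveredVerts [Fintype Ω] (conn : Conn → Sym2 Ω) (x : Conn → Bool) :
    Finset Ω :=
  univ.filter fun v => ¬ ∃ c, x c = true ∧ v ∈ conn c

lemma mem_uncoveredVerts [Fintype Ω] {x : Conn → Bool} {v : Ω} :
    v ∈ uncoveredVerts conn x ↔ ∀ c, x c = true → v ∉ conn c := by
  simp [uncoveredVerts]

lemma IsPerfectMatchingOn.filter_edgeSet_of_sup [Fintype Ω] [DecidableEq Ω]
    (hH : ∀ e, e ∈ H.edgeSet ↔ e ∈ G.edgeSet ∨ ∃ c, conn c = e)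
    (hconn : ∀ c, conn c ∉ G.edgeSet)
    {M : Finset (Sym2 Ω)} (hM : IsPerfectMatchingOn H univ M) :
    IsPerfectMatchingOn G (uncoveredVerts conn fun c => decide (conn c ∈ M))
      (M.filter (· ∈ G.edgeSet)) := by
  constructor
  · intro e he
    rw [mem_filter] at he
    refine ⟨he.2, fun v hv => mem_uncoveredVerts.2 fun c hc hvc => hconn c ?_⟩
    rw [(hM.2 v (mem_univ v)).unique ⟨of_decide_eq_true hc, hvc⟩ ⟨he.1, hv⟩]
    exact he.2
  · intro v hv
    obtain ⟨e, ⟨heM, hve⟩, huniq⟩ := hM.2 v (mem_univ v)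
    have heG : e ∈ G.edgeSet := by
      refine ((hH e).1 (hM.1 e heM).1).resolve_right ?_
      rintro ⟨c, rfl⟩
      exact mem_uncoveredVerts.1 hv c (decide_eq_true heM) hve
    exact ⟨e, ⟨mem_filter.2 ⟨heM, heG⟩, hve⟩,
      fun e' he' => huniq e' ⟨(mem_filter.1 he'.1).1, he'.2⟩⟩

lemma isPerfectMatchingOn_union_image [Fintype Ω] [DecidableEq Ω] [Fintype Conn]
    (hH : ∀ e, e ∈ H.edgeSet ↔ e ∈ G.edgeSet ∨ ∃ c, conn c = e)
    (hdisj : ∀ c c' v, v ∈ conn c → v ∈ conn c' → c = c')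
    {x : Conn → Bool} {N : Finset (Sym2 Ω)}
    (hN : IsPerfectMatchingOn G (uncoveredVerts conn x) N) :
    IsPerfectMatchingOn H univ (N ∪ (univ.filter (x · = true)).image conn) := by
  constructor
  · intro e he
    refine ⟨(hH e).2 ?_, fun v _ => mem_univ v⟩
    rcases mem_union.1 he with he | he
    · exact Or.inl (hN.1 e he).1
    · obtain ⟨c, -, rfl⟩ := mem_image.1 he
      exact Or.inr ⟨c, rfl⟩
  · intro v _
    by_cases hv : v ∈ uncoveredVerts conn x
    · obtain ⟨e, ⟨heN, hve⟩, huniq⟩ := hN.2 v hv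
      refine ⟨e, ⟨mem_union_left _ heN, hve⟩, ?_⟩
      rintro e' ⟨he', hve'⟩
      rcases mem_union.1 he' with he' | he'
      · exact huniq e' ⟨he', hve'⟩
      · obtain ⟨c, hc, rfl⟩ := mem_image.1 he'
        exact absurd hve' (mem_uncoveredVerts.1 hv c (mem_filter.1 hc).2)
    · obtain ⟨c, hc, hvc⟩ : ∃ c, x c = true ∧ v ∈ conn c := by
        simpa [mem_uncoveredVerts] using hv
      have hcx : c ∈ univ.filter (x · = true) := mem_filter.2 ⟨mem_univ c, hc⟩
      refine ⟨conn c, ⟨mem_union_right _ (mem_image_of_mem conn hcx), hvc⟩, ?_⟩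
      rintro e' ⟨he', hve'⟩
      rcases mem_union.1 he' with he' | he'
      · exact absurd ((hN.1 e' he').2 v hve') hv
      · obtain ⟨c', -, rfl⟩ := mem_image.1 he'
        rw [hdisj c' c v hve' hvc]

lemma injective_of_disjoint_edges (hdisj : ∀ c c' v, v ∈ conn c → v ∈ conn c' → c = c') :
    Function.Injective conn := fun c c' h =>
  hdisj c c' _ (conn c).out_fst_mem (h ▸ (conn c).out_fst_mem)

lemma decide_mem_union_image [DecidableEq Ω] [Fintype Conn]
    (hconn : ∀ c, conn c ∉ G.edgeSet) (hinj : Function.Injective conn)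
    {x : Conn → Bool} {N : Finset (Sym2 Ω)} (hN : ∀ e ∈ N, e ∈ G.edgeSet) (c : Conn) :
    decide (conn c ∈ N ∪ (univ.filter (x · = true)).image conn) = x c := by
  rw [Bool.eq_iff_iff, decide_eq_true_iff, mem_union, hinj.mem_finset_image, mem_filter]
  exact ⟨fun h => h.elim (fun hc => absurd (hN _ hc) (hconn c)) And.right,
    fun hc => Or.inr ⟨mem_univ c, hc⟩⟩

lemma filter_union_image_edgeSet [DecidableEq Ω] [Fintype Conn]
    (hconn : ∀ c, conn c ∉ G.edgeSet) {x : Conn → Bool} {N : Finset (Sym2 Ω)}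
    (hN : ∀ e ∈ N, e ∈ G.edgeSet) :
    (N ∪ (univ.filter (x · = true)).image conn).filter (· ∈ G.edgeSet) = N := by
  ext e
  simp only [mem_filter, mem_union, mem_image]
  refine ⟨?_, fun he => ⟨Or.inl he, hN e he⟩⟩
  rintro ⟨he | ⟨c, -, rfl⟩, heG⟩
  exacts [he, absurd heG (hconn c)]

lemma IsPerfectMatchingOn.prod_eq_prod_filter_edgeSet
    (hH : ∀ e, e ∈ H.edgeSet ↔ e ∈ G.edgeSet ∨ ∃ c, conn c = e)
    {w w' : Sym2 Ω → ℂ} (hw : ∀ e ∈ G.edgeSet, w' e = w e) (hw1 : ∀ c, w' (conn c) = 1)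
    {A : Finset Ω} {M : Finset (Sym2 Ω)} (hM : IsPerfectMatchingOn H A M) :
    ∏ e ∈ M, w' e = ∏ e ∈ M.filter (· ∈ G.edgeSet), w e := by
  rw [← prod_filter_mul_prod_filter_not M (· ∈ G.edgeSet)]
  have hconn_edges : ∏ e ∈ M.filter (· ∉ G.edgeSet), w' e = 1 := by
    refine prod_eq_one fun e he => ?_
    rw [mem_filter] at he
    obtain ⟨c, rfl⟩ := ((hH e).1 (hM.1 e he.1).1).resolve_left he.2
    exact hw1 c
  rw [hconn_edges, mul_one]
  exact prod_congr rfl fun e he => hw e (mem_filter.1 he).2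

theorem perfMatchOn_univ_eq_sum_perfMatchOn_uncoveredVerts [Fintype Ω] [DecidableEq Ω]
    [Fintype Conn]
    (hH : ∀ e, e ∈ H.edgeSet ↔ e ∈ G.edgeSet ∨ ∃ c, conn c = e)
    (hconn : ∀ c, conn c ∉ G.edgeSet)
    (hdisj : ∀ c c' v, v ∈ conn c → v ∈ conn c' → c = c')
    {w w' : Sym2 Ω → ℂ} (hw : ∀ e ∈ G.edgeSet, w' e = w e) (hw1 : ∀ c, w' (conn c) = 1) :
    perfMatchOn H w' univ = ∑ x : Conn → Bool, perfMatchOn G w (uncoveredVerts conn x) := by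
  simp only [perfMatchOn]
  rw [sum_sigma']
  refine sum_nbij' (fun M => ⟨fun c => decide (conn c ∈ M), M.filter (· ∈ G.edgeSet)⟩)
    (fun p => p.2 ∪ (univ.filter (p.1 · = true)).image conn) ?_ ?_ ?_ ?_ ?_
  · intro M hM
    simpa using (mem_filter.1 hM).2.filter_edgeSet_of_sup hH hconn
  · rintro ⟨x, N⟩ hN
    simpa using isPerfectMatchingOn_union_image hH hdisj (mem_filter.1 (mem_sigma.1 hN).2).2
  · intro M hM
    ext e
    simp only [mem_union, mem_filter, mem_image, mem_univ, true_and, decide_eq_true_eq]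
    refine ⟨?_, fun he => ?_⟩
    · rintro (⟨he, -⟩ | ⟨c, hc, rfl⟩) <;> assumption
    · rcases (hH e).1 ((mem_filter.1 hM).2.1 e he).1 with heG | ⟨c, rfl⟩
      exacts [Or.inl ⟨he, heG⟩, Or.inr ⟨c, he, rfl⟩]
  · rintro ⟨x, N⟩ hN
    have hNG : ∀ e ∈ N, e ∈ G.edgeSet := fun e he =>
      ((mem_filter.1 (mem_sigma.1 hN).2).2.1 e he).1
    exact Sigma.ext
      (funext (decide_mem_union_image hconn (injective_of_disjoint_edges hdisj) hNG))
      (heq_of_eq (filter_union_image_edgeSet hconn hNG))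
  · intro M hM
    exact (mem_filter.1 hM).2.prod_eq_prod_filter_edgeSet hH hw hw1

end ConnectingEdges

lemma mem_edgeSet_fromRel_iff {Ω ι Conn : Type*} (G : ι → SimpleGraph Ω)
    (epts : Conn → Ω × Ω) (hne : ∀ c, (epts c).1 ≠ (epts c).2) (e : Sym2 Ω) :
    e ∈ (SimpleGraph.fromRel fun a b =>
        (∃ i, (G i).Adj a b) ∨ ∃ c, epts c = (a, b) ∨ epts c = (b, a)).edgeSet ↔
      e ∈ (⨆ i, G i).edgeSet ∨ ∃ c, s((epts c).1, (epts c).2) = e := by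
  induction e using Sym2.ind with
  | _ a b =>
    have hpair : ∀ a b, (∃ c, epts c = (a, b) ∨ epts c = (b, a)) ↔
        ∃ c, s((epts c).1, (epts c).2) = s(a, b) := by
      simp only [Sym2.eq_iff, Prod.ext_iff, implies_true]
    simp only [SimpleGraph.mem_edgeSet, SimpleGraph.fromRel_adj, SimpleGraph.iSup_adj, hpair,
      Sym2.eq_swap (a := b), SimpleGraph.adj_comm _ b a, or_self]
    refine and_iff_right_of_imp ?_
    rintro (⟨i, h⟩ | ⟨c, h⟩) rfl
    · exact h.ne rfl
    · simp only [Sym2.eq_iff, or_self] at h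
      exact hne c (h.1.trans h.2.symm)

/-- **PerfMatch decomposes over matchgates.**
With the setup described above, let `H` be the weighted graph on `Ω` whose edges are the
matchgate edges (with weights `w`) together with the connecting edges (with weight `1`),
and for a configuration `x : Conn → Bool` let `μ i x` be the signature value of matchgate
`i`, i.e. the PerfMatch of the subgraph of `G i` induced by deleting those external
vertices of matchgate `i` lying on a connecting edge `c` with `x c = true`.  Then
`π(H) = ∑ x, ∏ i, μ i x`. -/
theorem perfMatch_decomposition {Ω : Type} [Fintype Ω] [DecidableEq Ω]
    {m : ℕ} (part : Ω → Fin m)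
    (G : Fin m → SimpleGraph Ω)
    (hG : ∀ (i : Fin m) (a b : Ω), (G i).Adj a b → part a = i ∧ part b = i)
    (w : Sym2 Ω → ℂ)
    (W : Finset Ω)
    (Conn : Type) [Fintype Conn] (epts : Conn → Ω × Ω)
    (hepts : ∀ c : Conn, (epts c).1 ∈ W ∧ (epts c).2 ∈ W
      ∧ part (epts c).1 ≠ part (epts c).2)
    (hcover : ∀ ω ∈ W, ∃! c : Conn, ω = (epts c).1 ∨ ω = (epts c).2) :
    perfMatchOn
        (SimpleGraph.fromRel (fun a b =>
          (∃ i : Fin m, (G i).Adj a b) ∨ ∃ c : Conn, epts c = (a, b) ∨ epts c = (b, a)))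
        (fun e => if ∃ c : Conn, e = Sym2.mk (epts c).1 (epts c).2 then 1 else w e)
        Finset.univ
      = ∑ x : Conn → Bool, ∏ i : Fin m,
          perfMatchOn (G i) w
            (Finset.univ.filter (fun ω => part ω = i
              ∧ ¬ ∃ c : Conn, x c = true ∧ (ω = (epts c).1 ∨ ω = (epts c).2))) := by
  set conn : Conn → Sym2 Ω := fun c => s((epts c).1, (epts c).2)
  have hconn : ∀ c, conn c ∉ (⨆ i, G i).edgeSet := fun c hc => by
    obtain ⟨i, hi⟩ : ∃ i, conn c ∈ (G i).edgeSet := by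
      simpa [SimpleGraph.edgeSet_iSup] using hc
    exact (hepts c).2.2 ((part_eq_of_mem_edgeSet hG hi (Sym2.mem_mk_left _ _)).trans
      (part_eq_of_mem_edgeSet hG hi (Sym2.mem_mk_right _ _)).symm)
  have hdisj : ∀ c c' v, v ∈ conn c → v ∈ conn c' → c = c' := fun c c' v hc hc' => by
    have hvW : v ∈ W := by
      rcases Sym2.mem_iff.1 hc with rfl | rfl
      exacts [(hepts c).1, (hepts c).2.1]
    exact (hcover v hvW).unique (Sym2.mem_iff.1 hc) (Sym2.mem_iff.1 hc')
  rw [perfMatchOn_univ_eq_sum_perfMatchOn_uncoveredVerts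
    (mem_edgeSet_fromRel_iff G epts fun c h => (hepts c).2.2 (congrArg part h)) hconn hdisj
    (fun e he => if_neg (by rintro ⟨c, rfl⟩; exact hconn c he)) (fun c => if_pos ⟨c, rfl⟩)]
  refine sum_congr rfl fun x _ => ?_
  rw [perfMatchOn_iSup_eq_prod hG]
  refine prod_congr rfl fun i _ => congrArg _ ?_
  ext v
  simp [uncoveredVerts, and_comm]
end
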